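/- For each x ∈ ℝ and t ∈ [0,T), the limit lim_{k→+∞, k ∈ (1,∞)} k·(m(x,t,k) - 1) exists and equals the absolutely convergent series Σ_{j=1}^∞ m_j^{(1)}(x,t). -/

import Mathlib

open MeasureTheory Filter Topology

noncomputable section

namespace Paper

/-- Iterated logarithm: `iterLog r` is the `r`-th iterate of `Real.log`. -/
def iterLog : ℕ → ℝ → ℝ
  | 0, s => s
  | r + 1, s => Real.log (iterLog r s)

/-- `LOG(s; r⃗, a⃗, σ) = (-1)^σ ∏_j (log_{r_j} s)^{a_j}` (empty product convention for `p = 0`). -/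
def LOG {p : ℕ} (r : Fin p → ℕ) (a : Fin p → ℝ) (σ : ℕ) (s : ℝ) : ℝ :=
  (-1 : ℝ) ^ σ * ∏ j : Fin p, iterLog (r j) s ^ a j

/-- `f(t) ≍ g(t)` as `t → T⁻`: there are `T₀ ∈ (0,T)` and `c₁, c₂ > 0` with
`c₁ g(t) ≤ f(t) ≤ c₂ g(t)` for all `t ∈ [T₀, T)`. -/
def AsympTo (T : ℝ) (f g : ℝ → ℝ) : Prop :=
  ∃ T₀ ∈ Set.Ioo (0 : ℝ) T, ∃ c₁ > (0 : ℝ), ∃ c₂ > (0 : ℝ),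
    ∀ t ∈ Set.Ico T₀ T, c₁ * g t ≤ f t ∧ f t ≤ c₂ * g t

/-- Partial derivative in `x`. -/
def px (u : ℝ → ℝ → ℝ) : ℝ → ℝ → ℝ := fun x t => deriv (fun x' => u x' t) x

/-- Partial derivative in `t`. -/
def pt (u : ℝ → ℝ → ℝ) : ℝ → ℝ → ℝ := fun x t => deriv (fun t' => u x t') t

/-- Mixed partial derivative `∂_x^{q₁} ∂_t^{q₂}` for real-valued functions. -/
def pdR (q₁ q₂ : ℕ) (u : ℝ → ℝ → ℝ) : ℝ → ℝ → ℝ :=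
  fun x t => iteratedDeriv q₁ (fun x' => iteratedDeriv q₂ (fun t' => u x' t') t) x

/-- Mixed partial derivative `∂_x^{q₁} ∂_t^{q₂}` for complex-valued functions. -/
def pdC (q₁ q₂ : ℕ) (g : ℝ → ℝ → ℂ) : ℝ → ℝ → ℂ :=
  fun x t => iteratedDeriv q₁ (fun x' => iteratedDeriv q₂ (fun t' => g x' t') t) x

/-- Schwartz class solution of the "bad" Boussinesq equation
`u_tt = u_xx + (u²)_xx + u_xxxx` on `ℝ × [0,T)`. -/
def IsSchwartzSolution (T : ℝ) (u : ℝ → ℝ → ℝ) : Prop :=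
  ContDiffOn ℝ (⊤ : ℕ∞) (fun q : ℝ × ℝ => u q.1 q.2) (Set.univ ×ˢ Set.Ico 0 T) ∧
  (∀ x : ℝ, ∀ t ∈ Set.Ico (0 : ℝ) T,
      pt (pt u) x t =
        px (px u) x t + px (px fun x' t' => u x' t' ^ 2) x t + px (px (px (px u))) x t) ∧
  (∀ N : ℕ, 1 ≤ N → ∀ τ ∈ Set.Ico (0 : ℝ) T, ∃ B : ℝ, ∀ x : ℝ, ∀ t ∈ Set.Icc (0 : ℝ) τ,
      ∑ i ∈ Finset.range (N + 1), (1 + |x|) ^ N * |iteratedDeriv i (fun x' => u x' t) x| ≤ B)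

/-- `ω = e^{2πi/3}`. -/
def ω : ℂ := Complex.exp (2 * Real.pi * Complex.I / 3)

/-- `e₁ = e^{-iπ/6}`. -/
def e₁ : ℂ := Complex.exp (-(Real.pi / 6) * Complex.I)

/-- `e₂ = e^{5iπ/6}`. -/
def e₂ : ℂ := Complex.exp (5 * Real.pi / 6 * Complex.I)

/-- `e₃ = e^{iπ/6}`. -/
def e₃ : ℂ := Complex.exp (Real.pi / 6 * Complex.I)

/-- `e₄ = e^{7iπ/6}`. -/
def e₄ : ℂ := Complex.exp (7 * Real.pi / 6 * Complex.I)

/-- Contour integral over `Γ̃ = {r e^{-iπ/6} : r > 1} ∪ {r e^{5iπ/6} : r > 1}`,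
each ray oriented in the direction of increasing modulus. -/
def contourInt (g : ℂ → ℂ) : ℂ :=
  (∫ r in Set.Ioi (1 : ℝ), g ((r : ℂ) * e₁)) * e₁ +
  (∫ r in Set.Ioi (1 : ℝ), g ((r : ℂ) * e₂)) * e₂

/-- The contour `Γ̃` as a set. -/
def Gammat : Set ℂ :=
  {k : ℂ | ∃ r : ℝ, 1 < r ∧ k = (r : ℂ) * e₁} ∪ {k : ℂ | ∃ r : ℝ, 1 < r ∧ k = (r : ℂ) * e₂}

/-- `Γ̃_m = Γ̃ ∩ {k : |k| > 2}`. -/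
def GammatM : Set ℂ := Gammat ∩ {k : ℂ | 2 < ‖k‖}

/-- The set `S`: the closure of
`{r e^{iπ/6} : r > 1} ∪ {r e^{7iπ/6} : r > 1} ∪ {r e^{5iπ/6} : 0 < r < 1} ∪ {r e^{-iπ/6} : 0 < r < 1}`. -/
def Sset : Set ℂ :=
  closure ({k : ℂ | ∃ r : ℝ, 1 < r ∧ k = (r : ℂ) * e₃} ∪
    {k : ℂ | ∃ r : ℝ, 1 < r ∧ k = (r : ℂ) * e₄} ∪
    {k : ℂ | ∃ r : ℝ, 0 < r ∧ r < 1 ∧ k = (r : ℂ) * e₂} ∪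
    {k : ℂ | ∃ r : ℝ, 0 < r ∧ r < 1 ∧ k = (r : ℂ) * e₁})

/-- `r̃(k) = (ω² - k²)/(1 - ω²k²)`. -/
def rtilde (k : ℂ) : ℂ := (ω ^ 2 - k ^ 2) / (1 - ω ^ 2 * k ^ 2)

/-- `f̃₀`: equals `f₂(k) = r̃(k) conj(f₁(1/conj k))` on the upper ray `(i, i∞)`
and `f₁(1/k)` on the lower ray `(-i, -i∞)`. -/
def ftilde0 (f₁ : ℂ → ℂ) (k : ℂ) : ℂ :=
  if 0 < k.im then rtilde k * starRingEnd ℂ (f₁ (1 / starRingEnd ℂ k)) else f₁ (1 / k)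

/-- The kernel `F(x,t,k,k₁)`. -/
def Fker (x₀ T : ℝ) (f₁ : ℂ → ℂ) (x t : ℝ) (k k₁ : ℂ) : ℂ :=
  Complex.exp (((x - x₀ : ℝ) : ℂ) / 2 * (ω * k₁)) *
  Complex.exp (((T - t : ℝ) : ℂ) / 4 * (ω * k₁) ^ 2) *
  (ω ^ 2 / (ω ^ 2 * k₁ - k) - ω / k₁ ^ 2 / (1 / (ω ^ 2 * k₁) - k)) *
  (ftilde0 f₁ (ω * k₁) *
    Complex.exp (-((x : ℂ) / 2) * (1 / (ω * k₁)) + (t : ℂ) / 4 * (1 / (ω * k₁)) ^ 2) /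
    (2 * (Real.pi : ℂ) * Complex.I))

/-- Iterated kernels: `mSeq F j` is `m_j`, with `mSeq F 0 ≡ 1` and
`m_{j+1}(k) = ∫_{Γ̃} F(k,k₁) m_j(k₁) dk₁`. -/
def mSeq (F : ℂ → ℂ → ℂ) : ℕ → ℂ → ℂ
  | 0 => fun _ => 1
  | j + 1 => fun k => contourInt fun k₁ => F k k₁ * mSeq F j k₁

/-- `m(x,t,k) = 1 + Σ_{j=1}^∞ m_j(x,t,k)`. -/
def mFun (x₀ T : ℝ) (f₁ : ℂ → ℂ) (x t : ℝ) (k : ℂ) : ℂ :=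
  1 + ∑' j : ℕ, mSeq (Fker x₀ T f₁ x t) (j + 1) k

/-- `F^{(1)}(x,t,k₁)`. -/
def F1ker (x₀ T : ℝ) (f₁ : ℂ → ℂ) (x t : ℝ) (k₁ : ℂ) : ℂ :=
  -(Complex.exp (((x - x₀ : ℝ) : ℂ) / 2 * (ω * k₁)) *
    Complex.exp (((T - t : ℝ) : ℂ) / 4 * (ω * k₁) ^ 2) *
    Complex.exp (-((x : ℂ) / 2) * (1 / (ω * k₁)) + (t : ℂ) / 4 * (1 / (ω * k₁)) ^ 2) *
    (ftilde0 f₁ (ω * k₁) / (2 * (Real.pi : ℂ) * Complex.I)) * (ω ^ 2 - ω / k₁ ^ 2))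

/-- `m1Seq x₀ T f₁ x t j = m_{j+1}^{(1)}(x,t)`, i.e. `m_j^{(1)} = m1Seq … (j-1)` for `j ≥ 1`. -/
def m1Seq (x₀ T : ℝ) (f₁ : ℂ → ℂ) (x t : ℝ) (j : ℕ) : ℂ :=
  contourInt fun k₁ => F1ker x₀ T f₁ x t k₁ * mSeq (Fker x₀ T f₁ x t) j k₁

end Paper

open Paper

/-!
On `Γ̃ = {r e₁ : |r| > 1}` one has `ω k₁ = r i`. Hence the exponentials in the kernel have
modulus at most one (the Gaussian factor `e^{-(T-t) r²/4}` even decays), `|f̃₀(ω k₁)| = |f₁(i/|r|)|`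
because `|r̃| = 1` on the imaginary axis, and `f̃₀(ω k₁)` vanishes for `|r| ≤ 2`. The line `ω² Γ̃`
makes an angle of at least `π/6` with the line of `Γ̃` and with `ℝ`, so for `k` on either line the
Cauchy factor is `O(1/|k₁|)` and also `O(1/|k|)`. This gives
`|F(k, r e₁)| ≤ (3/2π) |f₁(i/|r|)|/|r|`, hence `|m_j| ≤ a^j` on `Γ̃` with
`a = (3/π) ∫₁^∞ |f₁(i/y)|/y dy ≤ 3/(2π) < 1`. The kernels `k F(k, k₁)` (real `k ≥ 2`) and
`F^{(1)}(k₁)` lack the factor `1/|k₁|`; the Gaussian factor supplies it at the cost of `1/(T-t)`,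
so they are bounded by `C/(T-t)` times the same integrable majorant. Dominated convergence
on `Γ̃` gives `k m_{j+1}(k) → m_{j+1}^{(1)}` for each `j`, and dominated convergence for series
(Tannery) passes to the sum.
-/

namespace Paper

open Complex Set ComplexConjugate

/-! ### The constants `ω`, `e₁`, `e₂` -/

lemma ω_eq : ω = (-1 + √3 * I) / 2 := by
  rw [ω, show 2 * (Real.pi : ℂ) * I / 3 = ((Real.pi - Real.pi / 3 : ℝ) : ℂ) * I by push_cast; ring,
    exp_mul_I, ← ofReal_cos, ← ofReal_sin, Real.cos_pi_sub, Real.sin_pi_sub,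
    Real.cos_pi_div_three, Real.sin_pi_div_three]
  push_cast; ring

lemma e₁_eq : e₁ = (√3 - I) / 2 := by
  rw [e₁, show -((Real.pi : ℂ) / 6) = ((-(Real.pi / 6) : ℝ) : ℂ) by push_cast; ring,
    exp_mul_I, ← ofReal_cos, ← ofReal_sin, Real.cos_neg, Real.sin_neg,
    Real.cos_pi_div_six, Real.sin_pi_div_six]
  push_cast; ring

lemma e₂_eq_neg : e₂ = -e₁ := by
  rw [e₂, e₁, show 5 * (Real.pi : ℂ) / 6 * I = -(Real.pi / 6) * I + Real.pi * I by ring,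
    exp_add, exp_pi_mul_I, mul_neg_one]

lemma sqrt_three_sq : ((√3 : ℝ) : ℂ) ^ 2 = 3 := by
  rw [← ofReal_pow, Real.sq_sqrt (by norm_num)]; norm_num

lemma ω_sq_eq : ω ^ 2 = (-1 - √3 * I) / 2 := by
  rw [ω_eq]; linear_combination (I ^ 2 / 4) * sqrt_three_sq + (3 / 4) * I_sq

lemma ω_mul_e₁ : ω * e₁ = I := by
  rw [ω_eq, e₁_eq]; linear_combination (I / 4) * sqrt_three_sq - ((√3 : ℂ) / 4) * I_sq

lemma ω_sq_mul_e₁ : ω ^ 2 * e₁ = -(√3 + I) / 2 := by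
  rw [sq, mul_assoc, ω_mul_e₁, ω_eq]; linear_combination ((√3 : ℂ) / 2) * I_sq

lemma norm_ω : ‖ω‖ = 1 := by
  rw [ω, norm_exp]; simp

lemma norm_e₁ : ‖e₁‖ = 1 := by
  rw [e₁, norm_exp]; simp

lemma e₁_mul_conj : e₁ * conj e₁ = 1 := by
  rw [mul_conj, normSq_eq_norm_sq, norm_e₁]; simp

lemma ω_mul_ofReal_mul_e₁ (r : ℝ) : ω * (r * e₁) = r * I := by
  rw [mul_left_comm, ω_mul_e₁]

lemma norm_ofReal_mul_e₁ (r : ℝ) : ‖(r : ℂ) * e₁‖ = |r| := by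
  rw [norm_mul, norm_e₁, mul_one, norm_real, Real.norm_eq_abs]

lemma norm_ω_sq_mul (z : ℂ) : ‖ω ^ 2 * z‖ = ‖z‖ := by
  rw [norm_mul, norm_pow, norm_ω, one_pow, one_mul]

/-! ### The Cauchy factor of the kernel -/

lemma ω_sq_re : (ω ^ 2).re = -1 / 2 := by
  rw [ω_sq_eq]; simp

lemma ω_sq_mul_e₁_re : (ω ^ 2 * e₁).re = -√3 / 2 := by
  rw [ω_sq_mul_e₁]; simp [neg_div]

/-- The hypothesis says that the angle between `w` and `k` lies in `[π/6, 5π/6]`. -/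
lemma norm_le_two_mul_norm_sub_of_re_mul_conj_sq_le {w k : ℂ}
    (h : (w * conj k).re ^ 2 ≤ 3 / 4 * (‖w‖ ^ 2 * ‖k‖ ^ 2)) : ‖w‖ ≤ 2 * ‖w - k‖ := by
  have hsub : ‖w - k‖ ^ 2 = ‖w‖ ^ 2 + ‖k‖ ^ 2 - 2 * (w * conj k).re := by
    simp only [Complex.sq_norm, normSq_sub]
  -- `4 Re(w k̄)² ≤ 3 ‖w‖² ‖k‖² ≤ (3/4 ‖w‖² + ‖k‖²)²`
  have hre : 2 * (w * conj k).re ≤ 3 / 4 * ‖w‖ ^ 2 + ‖k‖ ^ 2 := by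
    nlinarith [sq_nonneg (3 / 4 * ‖w‖ ^ 2 - ‖k‖ ^ 2), sq_nonneg ‖w‖, sq_nonneg ‖k‖]
  refine (pow_le_pow_iff_left₀ (norm_nonneg _) (by positivity) two_ne_zero).mp ?_
  nlinarith

def Admissible (k : ℂ) : Prop := 1 ≤ ‖k‖ ∧ ∃ s : ℝ, k = s * e₁ ∨ k = s

lemma admissible_ofReal_mul_e₁ {s : ℝ} (hs : 1 < |s|) : Admissible (s * e₁) :=
  ⟨by rw [norm_ofReal_mul_e₁]; exact hs.le, s, Or.inl rfl⟩

lemma admissible_ofReal {ρ : ℝ} (hρ : 1 ≤ ρ) : Admissible ρ :=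
  ⟨by rw [norm_real, Real.norm_eq_abs, abs_of_nonneg (by linarith)]; exact hρ, ρ, Or.inr rfl⟩

variable {k : ℂ} {r : ℝ}

lemma Admissible.re_mul_conj_sq_le (hk : Admissible k) (r : ℝ) :
    (ω ^ 2 * (r * e₁) * conj k).re ^ 2 ≤ 3 / 4 * (‖ω ^ 2 * (r * e₁)‖ ^ 2 * ‖k‖ ^ 2) := by
  obtain ⟨-, s, rfl | rfl⟩ := hk
  · have : ω ^ 2 * (r * e₁) * conj (s * e₁) = (r * s : ℝ) * ω ^ 2 * (e₁ * conj e₁) := by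
      simp only [map_mul, conj_ofReal]; push_cast; ring
    rw [this, e₁_mul_conj, mul_one, re_ofReal_mul, ω_sq_re, norm_ω_sq_mul, norm_ofReal_mul_e₁,
      norm_ofReal_mul_e₁]
    nlinarith [sq_nonneg (r * s), sq_abs r, sq_abs s]
  · have : ω ^ 2 * (r * e₁) * conj (s : ℂ) = (r * s : ℝ) * (ω ^ 2 * e₁) := by
      simp only [conj_ofReal]; push_cast; ring
    rw [this, re_ofReal_mul, ω_sq_mul_e₁_re, norm_ω_sq_mul, norm_ofReal_mul_e₁, norm_real,
      Real.norm_eq_abs]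
    have h3 : √3 ^ 2 = 3 := Real.sq_sqrt (by norm_num)
    nlinarith [sq_nonneg (r * s), sq_abs r, sq_abs s]

lemma Admissible.abs_le_two_mul_norm_sub (hk : Admissible k) (r : ℝ) :
    |r| ≤ 2 * ‖ω ^ 2 * (r * e₁) - k‖ := by
  simpa only [norm_ω_sq_mul, norm_ofReal_mul_e₁] using
    norm_le_two_mul_norm_sub_of_re_mul_conj_sq_le (hk.re_mul_conj_sq_le r)

lemma Admissible.norm_le_two_mul_norm_sub (hk : Admissible k) (r : ℝ) :
    ‖k‖ ≤ 2 * ‖ω ^ 2 * (r * e₁) - k‖ := by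
  rw [← norm_sub_rev]
  refine norm_le_two_mul_norm_sub_of_re_mul_conj_sq_le ?_
  rw [← conj_re, map_mul, conj_conj, mul_comm, mul_comm (‖k‖ ^ 2)]
  exact hk.re_mul_conj_sq_le r

lemma norm_sub_le_norm_inv_sub (k : ℂ) (r : ℝ) :
    ‖k‖ - |r|⁻¹ ≤ ‖1 / (ω ^ 2 * (r * e₁)) - k‖ := by
  have : ‖1 / (ω ^ 2 * (r * e₁))‖ = |r|⁻¹ := by
    rw [norm_div, norm_one, norm_ω_sq_mul, norm_ofReal_mul_e₁, one_div]
  rw [← this, norm_sub_rev]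
  exact norm_sub_norm_le _ _

def pole (k k₁ : ℂ) : ℂ := ω ^ 2 / (ω ^ 2 * k₁ - k) - ω / k₁ ^ 2 / (1 / (ω ^ 2 * k₁) - k)

lemma norm_pole_le_add (k : ℂ) (r : ℝ) :
    ‖pole k (r * e₁)‖ ≤ 1 / ‖ω ^ 2 * (r * e₁) - k‖ + 1 / r ^ 2 / ‖1 / (ω ^ 2 * (r * e₁)) - k‖ := by
  refine (norm_sub_le _ _).trans_eq ?_
  rw [norm_div, norm_div, norm_div, norm_pow, norm_pow, norm_ω, one_pow, norm_ofReal_mul_e₁,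
    sq_abs]

lemma Admissible.norm_pole_le (hk : Admissible k) (hr : 2 ≤ |r|) :
    ‖pole k (r * e₁)‖ ≤ 3 / |r| := by
  have hr0 : 0 < |r| := by linarith
  have h₁ : |r| / 2 ≤ ‖ω ^ 2 * (r * e₁) - k‖ := by linarith [hk.abs_le_two_mul_norm_sub r]
  have h₂ : 1 / 2 ≤ ‖1 / (ω ^ 2 * (r * e₁)) - k‖ := by
    have : |r|⁻¹ ≤ 1 / 2 := by rw [inv_le_comm₀ hr0 (by norm_num)]; linarith
    linarith [norm_sub_le_norm_inv_sub k r, hk.1]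
  calc ‖pole k (r * e₁)‖ ≤ 1 / (|r| / 2) + 1 / r ^ 2 / (1 / 2) := by
        refine (norm_pole_le_add k r).trans ?_
        gcongr
    _ = 2 / |r| + 2 / |r| * (1 / |r|) := by rw [← sq_abs]; field_simp
    _ ≤ 2 / |r| + 2 / |r| * (1 / 2) := by gcongr
    _ = 3 / |r| := by ring

lemma Admissible.norm_mul_norm_pole_le (hk : Admissible k) (hk₂ : 2 ≤ ‖k‖) (hr : 2 ≤ |r|) :
    ‖k‖ * ‖pole k (r * e₁)‖ ≤ 3 := by
  have hk0 : 0 < ‖k‖ := by linarith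
  have h₁ : ‖k‖ / 2 ≤ ‖ω ^ 2 * (r * e₁) - k‖ := by linarith [hk.norm_le_two_mul_norm_sub r]
  have h₂ : 3 / 4 * ‖k‖ ≤ ‖1 / (ω ^ 2 * (r * e₁)) - k‖ := by
    have : |r|⁻¹ ≤ 1 / 2 := by rw [inv_le_comm₀ (by linarith) (by norm_num)]; linarith
    linarith [norm_sub_le_norm_inv_sub k r]
  have hr2 : 1 / r ^ 2 ≤ 1 / 4 := by
    rw [← sq_abs]; gcongr; nlinarith
  calc ‖k‖ * ‖pole k (r * e₁)‖ ≤ ‖k‖ * (1 / (‖k‖ / 2) + 1 / 4 / (3 / 4 * ‖k‖)) := by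
        refine mul_le_mul_of_nonneg_left ((norm_pole_le_add k r).trans ?_) hk0.le
        gcongr
    _ ≤ 3 := by field_simp; norm_num

lemma Admissible.pole_denominators_ne_zero (hk : Admissible k) (hr : 1 < |r|) :
    (r : ℂ) * e₁ ≠ 0 ∧ ω ^ 2 * (r * e₁) - k ≠ 0 ∧ 1 / (ω ^ 2 * (r * e₁)) - k ≠ 0 := by
  refine ⟨?_, ?_, ?_⟩ <;> rw [← norm_pos_iff]
  · rw [norm_ofReal_mul_e₁]; linarith
  · linarith [hk.abs_le_two_mul_norm_sub r]
  · have : |r|⁻¹ < 1 := inv_lt_one_of_one_lt₀ hr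
    linarith [norm_sub_le_norm_inv_sub k r, hk.1]

lemma continuousOn_pole {S : Set ℝ} {u v : ℝ → ℂ} (hu : Continuous u) (hv : Continuous v)
    (h : ∀ s ∈ S, v s ≠ 0 ∧ ω ^ 2 * v s - u s ≠ 0 ∧ 1 / (ω ^ 2 * v s) - u s ≠ 0) :
    ContinuousOn (fun s => pole (u s) (v s)) S := by
  have hω : ω ≠ 0 := by rw [← norm_pos_iff, norm_ω]; exact one_pos
  unfold pole
  fun_prop (disch := simp_all)

/-! ### The weight on the imaginary axis -/

lemma norm_rtilde_ofReal_mul_I (r : ℝ) : ‖rtilde (r * I)‖ = 1 := by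
  have h3 : √3 ^ 2 = 3 := Real.sq_sqrt (by norm_num)
  have hnum : ω ^ 2 - (r * I) ^ 2 = (r ^ 2 - 1 / 2 : ℝ) + (-√3 / 2 : ℝ) * I := by
    rw [ω_sq_eq]; push_cast; linear_combination (-(r : ℂ) ^ 2) * I_sq
  have hden : 1 - ω ^ 2 * (r * I) ^ 2 = (1 - r ^ 2 / 2 : ℝ) + (-√3 / 2 * r ^ 2 : ℝ) * I := by
    rw [ω_sq_eq]; push_cast; linear_combination ((r : ℂ) ^ 2 * (1 + √3 * I) / 2) * I_sq
  have hpos : 0 < (1 - r ^ 2 / 2) ^ 2 + (-√3 / 2 * r ^ 2) ^ 2 := by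
    nlinarith [sq_nonneg (r ^ 2 - 1), sq_nonneg r]
  rw [rtilde, hnum, hden, norm_div, norm_add_mul_I, norm_add_mul_I, div_eq_one_iff_eq
    (Real.sqrt_pos.mpr hpos).ne']
  congr 1
  linear_combination ((1 - r ^ 4) / 4) * h3

lemma rtilde_denom_ne_zero (r : ℝ) : 1 - ω ^ 2 * (r * I) ^ 2 ≠ 0 := fun h => by
  simpa [rtilde, h] using norm_rtilde_ofReal_mul_I r

variable {f₁ : ℂ → ℂ}

lemma one_div_ofReal_mul_I (r : ℝ) : 1 / ((r : ℂ) * I) = -(I / r) := by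
  rw [one_div, mul_inv, inv_I]; ring

lemma ftilde0_ofReal_mul_I_of_pos (hr : 0 < r) :
    ftilde0 f₁ (r * I) = rtilde (r * I) * conj (f₁ (I / r)) := by
  rw [ftilde0, if_pos (by simpa using hr), map_mul, conj_ofReal, conj_I, mul_neg, ← neg_mul,
    ← ofReal_neg, one_div_ofReal_mul_I, ofReal_neg, div_neg, neg_neg]

lemma ftilde0_ofReal_mul_I_of_neg (hr : r < 0) :
    ftilde0 f₁ (r * I) = f₁ (I / ↑(-r)) := by
  rw [ftilde0, if_neg (by simpa using hr.le), one_div_ofReal_mul_I, ofReal_neg, div_neg]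

lemma norm_ftilde0_ofReal_mul_I (hr : r ≠ 0) : ‖ftilde0 f₁ (r * I)‖ = ‖f₁ (I / ↑|r|)‖ := by
  rcases hr.lt_or_gt with hr | hr
  · rw [ftilde0_ofReal_mul_I_of_neg hr, abs_of_neg hr]
  · rw [ftilde0_ofReal_mul_I_of_pos hr, norm_mul, norm_rtilde_ofReal_mul_I, one_mul,
      RCLike.norm_conj, abs_of_pos hr]

lemma continuousOn_I_div
    (hsmooth : ContDiffOn ℝ (⊤ : ℕ∞) (fun y : ℝ => f₁ (I * y)) (Ioo 0 1)) :
    ContinuousOn (fun r : ℝ => f₁ (I / r)) (Ioi 1) := by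
  refine (hsmooth.continuousOn.comp (continuousOn_inv₀.mono fun r (hr : 1 < r) =>
    (zero_lt_one.trans hr).ne') fun r (hr : 1 < r) => ⟨inv_pos.2 (zero_lt_one.trans hr),
      inv_lt_one_of_one_lt₀ hr⟩).congr fun r _ => ?_
  simp [div_eq_mul_inv]

lemma continuousOn_ftilde0_ofReal_mul_I
    (hsmooth : ContDiffOn ℝ (⊤ : ℕ∞) (fun y : ℝ => f₁ (I * y)) (Ioo 0 1)) :
    ContinuousOn (fun r : ℝ => ftilde0 f₁ (r * I)) {r | 1 < |r|} := by
  have hsplit : {r : ℝ | 1 < |r|} = Iio (-1) ∪ Ioi 1 := by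
    ext r; simp [lt_abs, lt_neg, or_comm]
  have hf := continuousOn_I_div hsmooth
  rw [hsplit]
  refine ContinuousOn.union_of_isOpen ?_ ?_ isOpen_Iio isOpen_Ioi
  · refine ((hf.comp continuous_neg.continuousOn fun r (hr : r < -1) =>
      lt_neg_of_lt_neg hr).congr fun r (hr : r < -1) => ?_)
    exact ftilde0_ofReal_mul_I_of_neg (by linarith)
  · have hrtilde : Continuous fun r : ℝ => rtilde (r * I) := by
      unfold rtilde
      fun_prop (disch := exact fun r => rtilde_denom_ne_zero r)
    refine ((hrtilde.continuousOn.mul (continuous_conj.comp_continuousOn hf)).congr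
      fun r (hr : 1 < r) => ?_)
    exact ftilde0_ofReal_mul_I_of_pos (by linarith)

def majorant (f₁ : ℂ → ℂ) (y : ℝ) : ℝ := ‖f₁ (I / y)‖ / y

lemma majorant_nonneg {y : ℝ} (hy : 0 ≤ y) : 0 ≤ majorant f₁ y :=
  div_nonneg (norm_nonneg _) hy

def weight (x₀ T : ℝ) (f₁ : ℂ → ℂ) (x t : ℝ) (z : ℂ) : ℂ :=
  exp (((x - x₀ : ℝ) : ℂ) / 2 * z) * exp (((T - t : ℝ) : ℂ) / 4 * z ^ 2) *
    (ftilde0 f₁ z * exp (-((x : ℂ) / 2) * (1 / z) + (t : ℂ) / 4 * (1 / z) ^ 2) /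
      (2 * (Real.pi : ℂ) * I))

variable {x₀ T x t : ℝ}

lemma Fker_eq_pole_mul_weight (k k₁ : ℂ) :
    Fker x₀ T f₁ x t k k₁ = pole k k₁ * weight x₀ T f₁ x t (ω * k₁) := by
  rw [Fker, pole, weight]; ring

lemma F1ker_eq_mul_weight (k₁ : ℂ) :
    F1ker x₀ T f₁ x t k₁ = -(ω ^ 2 - ω / k₁ ^ 2) * weight x₀ T f₁ x t (ω * k₁) := by
  rw [F1ker, weight]; ring

lemma norm_weight_ofReal_mul_I_le (ht : 0 ≤ t) (hr : r ≠ 0) :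
    ‖weight x₀ T f₁ x t (r * I)‖ ≤
      Real.exp (-((T - t) * r ^ 2) / 4) * (‖f₁ (I / ↑|r|)‖ / (2 * Real.pi)) := by
  have hA : ((x - x₀ : ℝ) : ℂ) / 2 * (r * I) = ((x - x₀) * r / 2 : ℝ) * I := by push_cast; ring
  have hB : ((T - t : ℝ) : ℂ) / 4 * (r * I) ^ 2 = (-((T - t) * r ^ 2) / 4 : ℝ) := by
    push_cast; linear_combination ((T - t) * r ^ 2 / 4 : ℂ) * I_sq
  have hC : -((x : ℂ) / 2) * (1 / (r * I)) + (t : ℂ) / 4 * (1 / (r * I)) ^ 2 =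
      (x / (2 * r) : ℝ) * I + (-(t / (4 * r ^ 2)) : ℝ) := by
    rw [one_div_ofReal_mul_I]; push_cast; linear_combination (t / (4 * r ^ 2) : ℂ) * I_sq
  have hC' : ‖exp (-((x : ℂ) / 2) * (1 / (r * I)) + (t : ℂ) / 4 * (1 / (r * I)) ^ 2)‖ ≤ 1 := by
    rw [hC, norm_exp, add_re, re_ofReal_mul, I_re, mul_zero, zero_add, ofReal_re,
      Real.exp_le_one_iff, neg_nonpos]
    positivity
  have h2π : ‖2 * (Real.pi : ℂ) * I‖ = 2 * Real.pi := by
    simp [Real.pi_pos.le]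
  rw [weight, hA, hB, norm_mul, norm_mul, norm_exp_ofReal_mul_I, norm_exp_ofReal, one_mul,
    norm_div, norm_mul, h2π, norm_ftilde0_ofReal_mul_I hr]
  gcongr
  exact mul_le_of_le_one_right (norm_nonneg _) hC'

lemma exp_neg_mul_sq_div_four_le {δ : ℝ} (hδ : 0 < δ) (hr : 1 ≤ |r|) :
    Real.exp (-(δ * r ^ 2) / 4) ≤ 4 / (δ * |r|) := by
  have hu := Real.mul_exp_neg_le_exp_neg_one (δ * r ^ 2 / 4)
  have he : Real.exp (-1) ≤ 1 := Real.exp_le_one_iff.mpr (by norm_num)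
  have hr2 : |r| ≤ r ^ 2 := by rw [← sq_abs]; nlinarith
  rw [le_div_iff₀ (by positivity), neg_div]
  nlinarith [Real.exp_pos (-(δ * r ^ 2 / 4))]

lemma norm_weight_ofReal_mul_I_le_majorant (ht : 0 ≤ t) (htT : t < T) (hr : 1 ≤ |r|) :
    ‖weight x₀ T f₁ x t (r * I)‖ ≤ 2 / (Real.pi * (T - t)) * majorant f₁ |r| := by
  have hr0 : r ≠ 0 := abs_pos.mp (by linarith)
  refine (norm_weight_ofReal_mul_I_le ht hr0).trans ?_
  calc Real.exp (-((T - t) * r ^ 2) / 4) * (‖f₁ (I / ↑|r|)‖ / (2 * Real.pi))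
      ≤ 4 / ((T - t) * |r|) * (‖f₁ (I / ↑|r|)‖ / (2 * Real.pi)) := by
        gcongr; exact exp_neg_mul_sq_div_four_le (by linarith) hr
    _ = 2 / (Real.pi * (T - t)) * majorant f₁ |r| := by
        rw [majorant]; field_simp; ring

lemma f₁_I_div_eq_zero (hvanish : ∀ y ∈ Icc (1 / 2 : ℝ) 1, f₁ (I * y) = 0) {y : ℝ}
    (hy₁ : 1 ≤ y) (hy₂ : y ≤ 2) : f₁ (I / y) = 0 := by
  have hy : 0 < y := by linarith
  rw [div_eq_mul_inv, ← ofReal_inv]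
  exact hvanish _ ⟨by rw [le_inv_comm₀ (by norm_num) hy]; linarith, inv_le_one_of_one_le₀ hy₁⟩

lemma weight_ofReal_mul_I_eq_zero (hvanish : ∀ y ∈ Icc (1 / 2 : ℝ) 1, f₁ (I * y) = 0)
    (hr₁ : 1 < |r|) (hr₂ : |r| ≤ 2) : weight x₀ T f₁ x t (r * I) = 0 := by
  have hr0 : r ≠ 0 := abs_pos.mp (by linarith)
  have : ftilde0 f₁ (r * I) = 0 := by
    rw [← norm_eq_zero, norm_ftilde0_ofReal_mul_I hr0, f₁_I_div_eq_zero hvanish hr₁.le hr₂,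
      norm_zero]
  simp [weight, this]

lemma continuousOn_weight_ofReal_mul_I
    (hsmooth : ContDiffOn ℝ (⊤ : ℕ∞) (fun y : ℝ => f₁ (I * y)) (Ioo 0 1)) :
    ContinuousOn (fun r : ℝ => weight x₀ T f₁ x t (r * I)) {r | 1 < |r|} := by
  have hf := continuousOn_ftilde0_ofReal_mul_I hsmooth
  have hne : ∀ r ∈ {r : ℝ | 1 < |r|}, (r : ℂ) * I ≠ 0 := fun r (hr : 1 < |r|) =>
    mul_ne_zero (ofReal_ne_zero.mpr (abs_pos.mp (by linarith))) I_ne_zero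
  unfold weight
  fun_prop (disch := first | assumption | exact hne | simp [Real.pi_ne_zero])

/-! ### Integrals over `Γ̃` -/

lemma ofReal_mul_e₂ (r : ℝ) : (r : ℂ) * e₂ = ↑(-r) * e₁ := by
  rw [e₂_eq_neg]; push_cast; ring

lemma contourInt_const_mul (c : ℂ) (g : ℂ → ℂ) :
    contourInt (fun z => c * g z) = c * contourInt g := by
  rw [contourInt, contourInt, integral_const_mul, integral_const_mul]; ring

lemma norm_contourInt_le {g : ℂ → ℂ} {ψ : ℝ → ℝ} (hψ : IntegrableOn ψ (Ioi 1))
    (hg : ∀ r : ℝ, 1 < |r| → ‖g (r * e₁)‖ ≤ ψ |r|) :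
    ‖contourInt g‖ ≤ 2 * ∫ r in Ioi 1, ψ r := by
  have ray : ∀ σ : ℝ, |σ| = 1 → ‖∫ r in Ioi 1, g (↑(σ * r) * e₁)‖ ≤ ∫ r in Ioi 1, ψ r := by
    refine fun σ hσ => norm_integral_le_of_norm_le hψ
      (ae_restrict_of_forall_mem measurableSet_Ioi fun r (hr : 1 < r) => ?_)
    have hσr : |σ * r| = r := by rw [abs_mul, hσ, one_mul, abs_of_pos (by linarith)]
    simpa only [hσr] using hg (σ * r) (by rw [hσr]; exact hr)
  have e₂_norm : ‖e₂‖ = 1 := by rw [e₂_eq_neg, norm_neg, norm_e₁]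
  have h₁ := ray 1 (by simp)
  have h₂ := ray (-1) (by simp)
  simp only [one_mul, neg_one_mul] at h₁ h₂
  simp only [contourInt, ofReal_mul_e₂]
  refine (norm_add_le _ _).trans ?_
  rw [norm_mul, norm_mul, norm_e₁, e₂_norm, mul_one, mul_one]
  linarith

lemma tendsto_contourInt_of_dominated {ι : Type*} {l : Filter ι} [l.IsCountablyGenerated]
    {G : ι → ℂ → ℂ} {g : ℂ → ℂ} {ψ : ℝ → ℝ} (hψ : IntegrableOn ψ (Ioi 1))
    (hcont : ∀ᶠ n in l, ContinuousOn (fun r : ℝ => G n (r * e₁)) {r | 1 < |r|})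
    (hbound : ∀ᶠ n in l, ∀ r : ℝ, 1 < |r| → ‖G n (r * e₁)‖ ≤ ψ |r|)
    (hlim : ∀ r : ℝ, 1 < |r| → Tendsto (fun n => G n (r * e₁)) l (𝓝 (g (r * e₁)))) :
    Tendsto (fun n => contourInt (G n)) l (𝓝 (contourInt g)) := by
  have ray : ∀ σ : ℝ, |σ| = 1 → Tendsto (fun n => ∫ r in Ioi 1, G n (↑(σ * r) * e₁)) l
      (𝓝 (∫ r in Ioi 1, g (↑(σ * r) * e₁))) := by
    intro σ hσ
    have hσr : ∀ r ∈ Ioi (1 : ℝ), |σ * r| = r := fun r (hr : 1 < r) => by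
      rw [abs_mul, hσ, one_mul, abs_of_pos (by linarith)]
    have hmaps : MapsTo (fun r : ℝ => σ * r) (Ioi 1) {r | 1 < |r|} := fun r hr => by
      simp only [mem_ofPred_eq, hσr r hr]; exact hr
    refine tendsto_integral_filter_of_dominated_convergence ψ ?_ ?_ hψ ?_
    · filter_upwards [hcont] with n hn
      exact (hn.comp (continuous_const_mul σ).continuousOn hmaps).aestronglyMeasurable
        measurableSet_Ioi
    · filter_upwards [hbound] with n hn
      exact ae_restrict_of_forall_mem measurableSet_Ioi fun r hr => by
        simpa only [hσr r hr] using hn _ (hmaps hr)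
    · exact ae_restrict_of_forall_mem measurableSet_Ioi fun r hr => hlim _ (hmaps hr)
  have h₁ := (ray 1 (by simp)).mul_const e₁
  have h₂ := (ray (-1) (by simp)).mul_const e₂
  simp only [one_mul, neg_one_mul] at h₁ h₂
  simp only [contourInt, ofReal_mul_e₂]
  exact h₁.add h₂

lemma continuousOn_contourInt_of_dominated {S : Set ℝ} {G : ℝ → ℂ → ℂ} {ψ : ℝ → ℝ}
    (hψ : IntegrableOn ψ (Ioi 1))
    (hcont : ∀ s ∈ S, ContinuousOn (fun r : ℝ => G s (r * e₁)) {r | 1 < |r|})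
    (hbound : ∀ s ∈ S, ∀ r : ℝ, 1 < |r| → ‖G s (r * e₁)‖ ≤ ψ |r|)
    (hcont' : ∀ r : ℝ, 1 < |r| → ContinuousOn (fun s => G s (r * e₁)) S) :
    ContinuousOn (fun s => contourInt (G s)) S := fun s hs =>
  tendsto_contourInt_of_dominated hψ (eventually_nhdsWithin_of_forall hcont)
    (eventually_nhdsWithin_of_forall hbound) fun r hr => hcont' r hr s hs

/-! ### Kernel estimates and the Neumann series -/

lemma norm_contourInt_mul_le {K m : ℂ → ℂ} {ψ : ℝ → ℝ} {b : ℝ} (hψ : IntegrableOn ψ (Ioi 1))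
    (hK : ∀ r : ℝ, 1 < |r| → ‖K (r * e₁)‖ ≤ ψ |r|) (hm : ∀ r : ℝ, 1 < |r| → ‖m (r * e₁)‖ ≤ b) :
    ‖contourInt fun k₁ => K k₁ * m k₁‖ ≤ 2 * (∫ r in Ioi 1, ψ r) * b := by
  refine (norm_contourInt_le (hψ.mul_const b) fun r hr =>
    (norm_mul_le_of_le (hK r hr) (hm r hr) :)).trans_eq ?_
  rw [integral_mul_const]; ring

lemma Admissible.norm_Fker_le (hvanish : ∀ y ∈ Icc (1 / 2 : ℝ) 1, f₁ (I * y) = 0)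
    (hk : Admissible k) (ht : 0 ≤ t) (htT : t ≤ T) (hr : 1 < |r|) :
    ‖Fker x₀ T f₁ x t k (r * e₁)‖ ≤ 3 / (2 * Real.pi) * majorant f₁ |r| := by
  rw [Fker_eq_pole_mul_weight, ω_mul_ofReal_mul_e₁, norm_mul]
  rcases le_or_gt |r| 2 with hr₂ | hr₂
  · rw [weight_ofReal_mul_I_eq_zero hvanish hr hr₂, norm_zero, mul_zero]
    exact mul_nonneg (by positivity) (majorant_nonneg (by linarith))
  have hexp : Real.exp (-((T - t) * r ^ 2) / 4) ≤ 1 :=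
    Real.exp_le_one_iff.mpr (div_nonpos_of_nonpos_of_nonneg (by nlinarith) (by norm_num))
  calc ‖pole k (r * e₁)‖ * ‖weight x₀ T f₁ x t (r * I)‖
      ≤ 3 / |r| * (1 * (‖f₁ (I / ↑|r|)‖ / (2 * Real.pi))) := by
        gcongr
        · exact hk.norm_pole_le hr₂.le
        · exact (norm_weight_ofReal_mul_I_le ht (abs_pos.mp (by linarith))).trans
            (by gcongr)
    _ = 3 / (2 * Real.pi) * majorant f₁ |r| := by rw [majorant]; ring

lemma norm_ofReal_mul_Fker_le (hvanish : ∀ y ∈ Icc (1 / 2 : ℝ) 1, f₁ (I * y) = 0) {ρ : ℝ}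
    (hρ : 2 ≤ ρ) (ht : 0 ≤ t) (htT : t < T) (hr : 1 < |r|) :
    ‖(ρ : ℂ) * Fker x₀ T f₁ x t ρ (r * e₁)‖ ≤ 6 / (Real.pi * (T - t)) * majorant f₁ |r| := by
  have hnρ : ‖(ρ : ℂ)‖ = ρ := by rw [norm_real, Real.norm_eq_abs, abs_of_pos (by linarith)]
  rw [Fker_eq_pole_mul_weight, ω_mul_ofReal_mul_e₁, ← mul_assoc, norm_mul, norm_mul]
  rcases le_or_gt |r| 2 with hr₂ | hr₂
  · rw [weight_ofReal_mul_I_eq_zero hvanish hr hr₂, norm_zero, mul_zero]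
    have : 0 < T - t := by linarith
    exact mul_nonneg (by positivity) (majorant_nonneg (by linarith))
  calc ‖(ρ : ℂ)‖ * ‖pole ρ (r * e₁)‖ * ‖weight x₀ T f₁ x t (r * I)‖
      ≤ 3 * (2 / (Real.pi * (T - t)) * majorant f₁ |r|) := by
        gcongr
        · exact (admissible_ofReal (by linarith)).norm_mul_norm_pole_le (by linarith) hr₂.le
        · exact norm_weight_ofReal_mul_I_le_majorant ht htT hr.le
    _ = 6 / (Real.pi * (T - t)) * majorant f₁ |r| := by ring

lemma norm_F1ker_le (ht : 0 ≤ t) (htT : t < T) (hr : 1 < |r|) :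
    ‖F1ker x₀ T f₁ x t (r * e₁)‖ ≤ 4 / (Real.pi * (T - t)) * majorant f₁ |r| := by
  have hr2 : 1 / r ^ 2 ≤ 1 := by rw [← sq_abs]; exact div_le_one_of_le₀ (by nlinarith) (by positivity)
  rw [F1ker_eq_mul_weight, ω_mul_ofReal_mul_e₁, norm_mul, norm_neg]
  calc ‖ω ^ 2 - ω / (r * e₁) ^ 2‖ * ‖weight x₀ T f₁ x t (r * I)‖
      ≤ (1 + 1 / r ^ 2) * (2 / (Real.pi * (T - t)) * majorant f₁ |r|) := by
        gcongr
        · refine (norm_sub_le _ _).trans_eq ?_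
          rw [norm_div, norm_pow, norm_pow, norm_ω, one_pow, norm_ofReal_mul_e₁, sq_abs]
        · exact norm_weight_ofReal_mul_I_le_majorant ht htT hr.le
    _ ≤ 2 * (2 / (Real.pi * (T - t)) * majorant f₁ |r|) := by
        have : 0 < T - t := by linarith
        gcongr
        · exact mul_nonneg (by positivity) (majorant_nonneg (by linarith))
        · linarith
    _ = 4 / (Real.pi * (T - t)) * majorant f₁ |r| := by ring

lemma tendsto_ofReal_div_sub (c : ℂ) :
    Tendsto (fun ρ : ℝ => (ρ : ℂ) / (c - ρ)) atTop (𝓝 (-1)) := by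
  have hinv : Tendsto (fun ρ : ℝ => (ρ : ℂ)⁻¹) atTop (𝓝 0) := by
    simpa [Function.comp_def] using (continuous_ofReal.tendsto 0).comp tendsto_inv_atTop_zero
  have hlim : Tendsto (fun ρ : ℝ => (c * (ρ : ℂ)⁻¹ - 1)⁻¹) atTop (𝓝 (-1)) := by
    simpa using ((hinv.const_mul c).sub_const 1).inv₀ (by norm_num)
  refine hlim.congr' ((eventually_ne_atTop 0).mono fun ρ hρ => ?_)
  rw [← div_eq_mul_inv, div_sub_one (ofReal_ne_zero.mpr hρ), inv_div]

lemma tendsto_ofReal_mul_pole (k₁ : ℂ) :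
    Tendsto (fun ρ : ℝ => (ρ : ℂ) * pole ρ k₁) atTop (𝓝 (-(ω ^ 2 - ω / k₁ ^ 2))) := by
  have h := ((tendsto_ofReal_div_sub (ω ^ 2 * k₁)).const_mul (ω ^ 2)).sub
    ((tendsto_ofReal_div_sub (1 / (ω ^ 2 * k₁))).const_mul (ω / k₁ ^ 2))
  refine (h.congr fun ρ => ?_).trans_eq (by ring_nf)
  rw [pole]; ring

lemma Admissible.continuousOn_Fker
    (hsmooth : ContDiffOn ℝ (⊤ : ℕ∞) (fun y : ℝ => f₁ (I * y)) (Ioo 0 1)) (hk : Admissible k) :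
    ContinuousOn (fun r : ℝ => Fker x₀ T f₁ x t k (r * e₁)) {r | 1 < |r|} := by
  simp_rw [Fker_eq_pole_mul_weight, ω_mul_ofReal_mul_e₁]
  exact (continuousOn_pole continuous_const (continuous_ofReal.mul continuous_const)
    fun r hr => hk.pole_denominators_ne_zero hr).mul (continuousOn_weight_ofReal_mul_I hsmooth)

lemma continuousOn_Fker_ofReal_mul_e₁_left (hr : 1 < |r|) :
    ContinuousOn (fun s : ℝ => Fker x₀ T f₁ x t (s * e₁) (r * e₁)) {s | 1 < |s|} := by
  simp_rw [Fker_eq_pole_mul_weight]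
  exact (continuousOn_pole (continuous_ofReal.mul continuous_const) continuous_const
    fun s hs => (admissible_ofReal_mul_e₁ hs).pole_denominators_ne_zero hr).mul continuousOn_const

def neumannRatio (f₁ : ℂ → ℂ) : ℝ := 3 / Real.pi * ∫ y in Ioi 1, majorant f₁ y

lemma neumannRatio_nonneg : 0 ≤ neumannRatio f₁ :=
  mul_nonneg (by positivity) (setIntegral_nonneg measurableSet_Ioi fun _ hy =>
    majorant_nonneg (zero_le_one.trans (le_of_lt hy)))

lemma neumannRatio_lt_one {M : ℝ} (hM : 2 ≤ M)
    (hle : ∫ y in Ioi 1, majorant f₁ y ≤ 1 / M) : neumannRatio f₁ < 1 := by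
  have h1M : 1 / M ≤ 1 / 2 := one_div_le_one_div_of_le (by norm_num) hM
  calc neumannRatio f₁ ≤ 3 / Real.pi * (1 / 2) := by
        unfold neumannRatio; gcongr; exact hle.trans h1M
    _ < 1 := by
        rw [div_mul_eq_mul_div, mul_one_div, div_div, div_lt_one (by positivity)]
        linarith [Real.pi_gt_three]

lemma norm_mSeq_le (hvanish : ∀ y ∈ Icc (1 / 2 : ℝ) 1, f₁ (I * y) = 0)
    (hL1 : IntegrableOn (majorant f₁) (Ioi 1)) (ht : 0 ≤ t) (htT : t ≤ T) (j : ℕ) {s : ℝ}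
    (hs : 1 < |s|) : ‖mSeq (Fker x₀ T f₁ x t) j (s * e₁)‖ ≤ neumannRatio f₁ ^ j := by
  induction j generalizing s with
  | zero => simp [mSeq]
  | succ j ih =>
    refine (norm_contourInt_mul_le (hL1.const_mul (3 / (2 * Real.pi)))
      (fun r hr => (admissible_ofReal_mul_e₁ hs).norm_Fker_le hvanish ht htT hr)
      fun r hr => ih hr).trans_eq ?_
    rw [integral_const_mul, neumannRatio, pow_succ]; ring

lemma continuousOn_mSeq (hsmooth : ContDiffOn ℝ (⊤ : ℕ∞) (fun y : ℝ => f₁ (I * y)) (Ioo 0 1))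
    (hvanish : ∀ y ∈ Icc (1 / 2 : ℝ) 1, f₁ (I * y) = 0)
    (hL1 : IntegrableOn (majorant f₁) (Ioi 1)) (ht : 0 ≤ t) (htT : t ≤ T) (j : ℕ) :
    ContinuousOn (fun s : ℝ => mSeq (Fker x₀ T f₁ x t) j (s * e₁)) {s | 1 < |s|} := by
  induction j with
  | zero => exact continuousOn_const
  | succ j ih =>
    simp only [mSeq]
    exact continuousOn_contourInt_of_dominated
      (G := fun s k₁ => Fker x₀ T f₁ x t (s * e₁) k₁ * mSeq (Fker x₀ T f₁ x t) j k₁)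
      ((hL1.const_mul (3 / (2 * Real.pi))).mul_const (neumannRatio f₁ ^ j))
      (fun s hs => ((admissible_ofReal_mul_e₁ hs).continuousOn_Fker hsmooth).mul ih)
      (fun s hs r hr => norm_mul_le_of_le
        ((admissible_ofReal_mul_e₁ hs).norm_Fker_le hvanish ht htT hr)
        (norm_mSeq_le hvanish hL1 ht htT j hr))
      fun r hr => (continuousOn_Fker_ofReal_mul_e₁_left hr).mul continuousOn_const

lemma norm_m1Seq_le (hvanish : ∀ y ∈ Icc (1 / 2 : ℝ) 1, f₁ (I * y) = 0)
    (hL1 : IntegrableOn (majorant f₁) (Ioi 1)) (ht : 0 ≤ t) (htT : t < T) (j : ℕ) :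
    ‖m1Seq x₀ T f₁ x t j‖ ≤
      2 * (4 / (Real.pi * (T - t)) * ∫ y in Ioi 1, majorant f₁ y) * neumannRatio f₁ ^ j := by
  refine (norm_contourInt_mul_le (hL1.const_mul _) (fun r hr => norm_F1ker_le ht htT hr)
    fun r hr => norm_mSeq_le hvanish hL1 ht htT.le j hr).trans_eq ?_
  rw [integral_const_mul]

lemma ofReal_mul_mSeq_succ (F : ℂ → ℂ → ℂ) (j : ℕ) (ρ : ℝ) :
    (ρ : ℂ) * mSeq F (j + 1) ρ = contourInt fun k₁ => ρ * F ρ k₁ * mSeq F j k₁ := by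
  simp only [mSeq, mul_assoc, contourInt_const_mul]

lemma norm_ofReal_mul_mSeq_succ_le (hvanish : ∀ y ∈ Icc (1 / 2 : ℝ) 1, f₁ (I * y) = 0)
    (hL1 : IntegrableOn (majorant f₁) (Ioi 1)) (ht : 0 ≤ t) (htT : t < T) {ρ : ℝ} (hρ : 2 ≤ ρ)
    (j : ℕ) : ‖(ρ : ℂ) * mSeq (Fker x₀ T f₁ x t) (j + 1) ρ‖ ≤
      2 * (6 / (Real.pi * (T - t)) * ∫ y in Ioi 1, majorant f₁ y) * neumannRatio f₁ ^ j := by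
  rw [ofReal_mul_mSeq_succ]
  refine (norm_contourInt_mul_le (hL1.const_mul _)
    (fun r hr => norm_ofReal_mul_Fker_le hvanish hρ ht htT hr)
    fun r hr => norm_mSeq_le hvanish hL1 ht htT.le j hr).trans_eq ?_
  rw [integral_const_mul]

lemma tendsto_ofReal_mul_mSeq_succ
    (hsmooth : ContDiffOn ℝ (⊤ : ℕ∞) (fun y : ℝ => f₁ (I * y)) (Ioo 0 1))
    (hvanish : ∀ y ∈ Icc (1 / 2 : ℝ) 1, f₁ (I * y) = 0)
    (hL1 : IntegrableOn (majorant f₁) (Ioi 1)) (ht : 0 ≤ t) (htT : t < T) (j : ℕ) :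
    Tendsto (fun ρ : ℝ => (ρ : ℂ) * mSeq (Fker x₀ T f₁ x t) (j + 1) ρ) atTop
      (𝓝 (m1Seq x₀ T f₁ x t j)) := by
  simp only [ofReal_mul_mSeq_succ]
  refine tendsto_contourInt_of_dominated
    ((hL1.const_mul (6 / (Real.pi * (T - t)))).mul_const (neumannRatio f₁ ^ j)) ?_ ?_ ?_
  · filter_upwards [eventually_ge_atTop 2] with ρ hρ
    exact (continuousOn_const.mul ((admissible_ofReal (by linarith)).continuousOn_Fker
      hsmooth)).mul (continuousOn_mSeq hsmooth hvanish hL1 ht htT.le j)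
  · filter_upwards [eventually_ge_atTop 2] with ρ hρ r hr
    exact norm_mul_le_of_le (norm_ofReal_mul_Fker_le hvanish hρ ht htT hr)
      (norm_mSeq_le hvanish hL1 ht htT.le j hr)
  · intro r _
    have h := (tendsto_ofReal_mul_pole (r * e₁)).mul_const
      (weight x₀ T f₁ x t (ω * (r * e₁)) * mSeq (Fker x₀ T f₁ x t) j (r * e₁))
    simp only [Fker_eq_pole_mul_weight, F1ker_eq_mul_weight, ← mul_assoc] at h ⊢
    exact h

end Paper

theorem statement_10_general (x₀ T M : ℝ) (hM : 2 ≤ M) (f₁ : ℂ → ℂ)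
    (hsmooth : ContDiffOn ℝ (⊤ : ℕ∞) (fun y : ℝ => f₁ (Complex.I * (y : ℂ))) (Set.Ioo (0 : ℝ) 1))
    (hvanish : ∀ y ∈ Set.Icc (1 / 2 : ℝ) 1, f₁ (Complex.I * (y : ℂ)) = 0)
    (hL1 : IntegrableOn (fun y : ℝ => ‖f₁ (Complex.I / (y : ℂ))‖ / y) (Set.Ioi 1))
    (hL1le : ∫ y in Set.Ioi (1 : ℝ), ‖f₁ (Complex.I / (y : ℂ))‖ / y ≤ 1 / M)
    (x t : ℝ) (ht : t ∈ Set.Ico (0 : ℝ) T) :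
    (Summable fun j : ℕ => ‖m1Seq x₀ T f₁ x t j‖) ∧
    Tendsto (fun k : ℝ => (k : ℂ) * (mFun x₀ T f₁ x t k - 1)) atTop
      (𝓝 (∑' j : ℕ, m1Seq x₀ T f₁ x t j)) := by
  obtain ⟨ht₀, htT⟩ := ht
  have hgeom := summable_geometric_of_lt_one neumannRatio_nonneg (neumannRatio_lt_one hM hL1le)
  refine ⟨.of_nonneg_of_le (fun _ => norm_nonneg _) (norm_m1Seq_le hvanish hL1 ht₀ htT)
    (hgeom.mul_left _), ?_⟩
  refine (tendsto_tsum_of_dominated_convergence (hgeom.mul_left _)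
    (tendsto_ofReal_mul_mSeq_succ hsmooth hvanish hL1 ht₀ htT)
    ((eventually_ge_atTop 2).mono fun ρ hρ => norm_ofReal_mul_mSeq_succ_le hvanish hL1 ht₀ htT hρ)
    ).congr fun ρ => ?_
  rw [mFun, add_sub_cancel_left, tsum_mul_left]

/-- Lemma 5.1: for each `x ∈ ℝ` and `t ∈ [0,T)`, the limit `lim_{k→+∞} k(m(x,t,k)-1)`
(along real `k ∈ (1,∞)`) exists and equals the absolutely convergent series
`Σ_{j=1}^∞ m_j^{(1)}(x,t)`. -/
theorem statement_10 (x₀ T M : ℝ) (hT : 0 < T) (hM : 2 ≤ M) (f₁ : ℂ → ℂ)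
    (hsmooth : ContDiffOn ℝ (⊤ : ℕ∞) (fun y : ℝ => f₁ (Complex.I * (y : ℂ))) (Set.Ioo (0 : ℝ) 1))
    (hvanish : ∀ y ∈ Set.Icc (1 / 2 : ℝ) 1, f₁ (Complex.I * (y : ℂ)) = 0)
    (hL1 : IntegrableOn (fun y : ℝ => ‖f₁ (Complex.I / (y : ℂ))‖ / y) (Set.Ioi 1))
    (hL1le : ∫ y in Set.Ioi (1 : ℝ), ‖f₁ (Complex.I / (y : ℂ))‖ / y ≤ 1 / M)
    (x t : ℝ) (ht : t ∈ Set.Ico (0 : ℝ) T) :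
    (Summable fun j : ℕ => ‖m1Seq x₀ T f₁ x t j‖) ∧
    Tendsto (fun k : ℝ => (k : ℂ) * (mFun x₀ T f₁ x t k - 1)) atTop
      (𝓝 (∑' j : ℕ, m1Seq x₀ T f₁ x t j)) :=
  statement_10_general x₀ T M hM f₁ hsmooth hvanish hL1 hL1le x t ht
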